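/- Action of the autoparallel equation, non-affine parametrization: Let U ⊆ ℝⁿ be open and H : U → (Fin n → Fin n → ℝ) smooth with H(x) symmetric and invertible for every x. Let γ : I → U be a smooth curve on an open interval I with Σ_{a,b} H_{ab}(γ(λ)) γ'^a(λ) γ'^b(λ) ≠ 0 for all λ ∈ I, and set 𝓛(λ) := √|Σ_{a,b} H_{ab}(γ(λ)) γ'^a(λ) γ'^b(λ)|. If γ satisfies the Euler–Lagrange equations d/dλ [ (1/𝓛) Σ_b H_{ab}(γ) γ'^b ] = (1/(2𝓛)) Σ_{b,c} ∂_a H_{bc}(γ) γ'^b γ'^c for every a and every λ ∈ I, then for all λ ∈ I and all a: γ''^a(λ) + Σ_{b,c} Γ[H]^a_{bc}(γ(λ)) γ'^b(λ) γ'^c(λ) = (𝓛'(λ)/𝓛(λ)) γ'^a(λ). -/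

import Mathlib

open scoped BigOperators

noncomputable def pd {n : ℕ} (f : (Fin n → ℝ) → ℝ) (a : Fin n) (x : Fin n → ℝ) : ℝ :=
  fderiv ℝ f x (Pi.single a 1)

noncomputable def minv {n : ℕ} (A : Fin n → Fin n → ℝ) : Fin n → Fin n → ℝ :=
  fun a b => (Matrix.of A)⁻¹ a b

noncomputable def christoffel {n : ℕ} (H : (Fin n → ℝ) → Fin n → Fin n → ℝ)
    (x : Fin n → ℝ) (a b c : Fin n) : ℝ :=
  (1 / 2) * ∑ d, minv (H x) a d *
    (pd (fun y => H y c d) b x + pd (fun y => H y b d) c x - pd (fun y => H y b c) d x)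

noncomputable def cderiv {n : ℕ} (γ : ℝ → Fin n → ℝ) (a : Fin n) (t : ℝ) : ℝ :=
  deriv (fun s => γ s a) t

noncomputable def cderiv2 {n : ℕ} (γ : ℝ → Fin n → ℝ) (a : Fin n) (t : ℝ) : ℝ :=
  deriv (cderiv γ a) t

noncomputable def lag {n : ℕ} (H : (Fin n → ℝ) → Fin n → Fin n → ℝ)
    (γ : ℝ → Fin n → ℝ) (t : ℝ) : ℝ :=
  Real.sqrt |∑ a, ∑ b, H (γ t) a b * cderiv γ a t * cderiv γ b t|

/-!
Applying the product rule to the momentum `p_a = H_{ab} γ'^b / 𝓛`, the Euler–Lagrange equation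
becomes `(H_{ab} γ'^b)' = (𝓛'/𝓛) H_{ab} γ'^b + ½ ∂_a H_{bc} γ'^b γ'^c`. Expanding the left side by
the chain rule and symmetrising `∂_c H_{ab} γ'^b γ'^c` with the symmetry of `H` gives
`H_{ab} (γ''^b + Γ^b_{cd} γ'^c γ'^d) = (𝓛'/𝓛) H_{ab} γ'^b`, and multiplying by `H⁻¹` gives the claim.
-/

open Finset
open scoped Matrix

section Calculus

variable {n : ℕ}

lemma fderiv_apply_eq_sum_pd (f : (Fin n → ℝ) → ℝ) (x v : Fin n → ℝ) :
    fderiv ℝ f x v = ∑ c, pd f c x * v c := by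
  conv_lhs => rw [← univ_sum_single v, map_sum]
  refine sum_congr rfl fun c _ => ?_
  rw [← mul_one (v c), ← smul_eq_mul, Pi.single_smul', map_smul, smul_eq_mul, smul_eq_mul, mul_one,
    mul_comm, pd]

lemma pd_congr_of_eqOn {f g : (Fin n → ℝ) → ℝ} {U : Set (Fin n → ℝ)} (hU : IsOpen U)
    {x : Fin n → ℝ} (hx : x ∈ U) (h : Set.EqOn f g U) (a : Fin n) : pd f a x = pd g a x := by
  rw [pd, pd, (Filter.eventuallyEq_of_mem (hU.mem_nhds hx) h).fderiv_eq]

lemma differentiableAt_cderiv {γ : ℝ → Fin n → ℝ} {I : Set ℝ} (hγ : ContDiffOn ℝ 2 γ I)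
    (hI : IsOpen I) {t : ℝ} (ht : t ∈ I) (a : Fin n) : DifferentiableAt ℝ (cderiv γ a) t := by
  have hγa : ContDiffOn ℝ 1 (cderiv γ a) I :=
    (contDiffOn_pi.1 hγ a).deriv_of_isOpen hI (by norm_num)
  exact (hγa.differentiableOn one_ne_zero t ht).differentiableAt (hI.mem_nhds ht)

lemma hasDerivAt_comp_curve {f : (Fin n → ℝ) → ℝ} {γ : ℝ → Fin n → ℝ} {t : ℝ}
    (hf : DifferentiableAt ℝ f (γ t)) (hγ : DifferentiableAt ℝ γ t) :
    HasDerivAt (fun s => f (γ s)) (∑ d, pd f d (γ t) * cderiv γ d t) t := by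
  have hγ' : HasDerivAt γ (fun d => cderiv γ d t) t :=
    hasDerivAt_pi.2 fun d => (differentiableAt_pi.1 hγ d).hasDerivAt
  have hcomp := hf.hasFDerivAt.comp_hasDerivAt t hγ'
  rw [fderiv_apply_eq_sum_pd] at hcomp
  exact hcomp

variable {H : (Fin n → ℝ) → Fin n → Fin n → ℝ} {γ : ℝ → Fin n → ℝ} {t : ℝ}

lemma hasDerivAt_momentum (hH : ∀ a b, DifferentiableAt ℝ (fun y => H y a b) (γ t))
    (hγ : DifferentiableAt ℝ γ t) (hγ' : ∀ b, DifferentiableAt ℝ (cderiv γ b) t) (a : Fin n) :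
    HasDerivAt (fun s => ∑ b, H (γ s) a b * cderiv γ b s)
      (∑ b, H (γ t) a b * cderiv2 γ b t +
        ∑ b, ∑ c, pd (fun y => H y a b) c (γ t) * cderiv γ c t * cderiv γ b t) t := by
  refine (HasDerivAt.fun_sum fun b _ =>
    (hasDerivAt_comp_curve (hH a b) hγ).mul (hγ' b).hasDerivAt).congr_deriv ?_
  rw [← sum_add_distrib]
  refine sum_congr rfl fun b _ => ?_
  rw [sum_mul, cderiv2]
  ring

lemma lag_ne_zero (h0 : ∑ a, ∑ b, H (γ t) a b * cderiv γ a t * cderiv γ b t ≠ 0) :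
    lag H γ t ≠ 0 :=
  Real.sqrt_ne_zero'.2 (abs_pos.2 h0)

lemma differentiableAt_lag (hH : ∀ a b, DifferentiableAt ℝ (fun y => H y a b) (γ t))
    (hγ : DifferentiableAt ℝ γ t) (hγ' : ∀ b, DifferentiableAt ℝ (cderiv γ b) t)
    (h0 : ∑ a, ∑ b, H (γ t) a b * cderiv γ a t * cderiv γ b t ≠ 0) :
    DifferentiableAt ℝ (lag H γ) t := by
  have hq : DifferentiableAt ℝ
      (fun s => ∑ a, ∑ b, H (γ s) a b * cderiv γ a s * cderiv γ b s) t :=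
    .fun_sum fun a _ => .fun_sum fun b _ =>
      (((hH a b).comp t hγ).mul (hγ' a)).mul (hγ' b)
  exact (hq.abs h0).sqrt (abs_ne_zero.2 h0)

end Calculus

lemma eq_of_deriv_one_div_mul_eq {L p : ℝ → ℝ} {t L' p' S : ℝ} (hL : HasDerivAt L L' t)
    (hL0 : L t ≠ 0) (hp : HasDerivAt p p' t)
    (h : deriv (fun s => 1 / L s * p s) t = 1 / (2 * L t) * S) :
    p' = L' / L t * p t + S / 2 := by
  simp only [one_div] at h
  have hd : HasDerivAt (fun s => (L s)⁻¹ * p s) _ t := (hL.inv hL0).mul hp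
  rw [hd.deriv, Pi.inv_apply] at h
  field_simp at h ⊢
  linarith

section Christoffel

variable {n : ℕ} {H : (Fin n → ℝ) → Fin n → Fin n → ℝ} {x : Fin n → ℝ}

noncomputable def christoffelFirst (H : (Fin n → ℝ) → Fin n → Fin n → ℝ) (x : Fin n → ℝ)
    (a b c : Fin n) : ℝ :=
  (1 / 2) * (pd (fun y => H y c a) b x + pd (fun y => H y b a) c x - pd (fun y => H y b c) a x)

lemma christoffel_eq_sum_minv_mul_christoffelFirst (b c e : Fin n) :
    christoffel H x e b c = ∑ a, minv (H x) e a * christoffelFirst H x a b c := by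
  rw [christoffel, mul_sum]
  exact sum_congr rfl fun a _ => by rw [christoffelFirst]; ring

lemma sum_christoffelFirst_mul_mul
    (hsym : ∀ b c d, pd (fun y => H y b c) d x = pd (fun y => H y c b) d x)
    (v : Fin n → ℝ) (a : Fin n) :
    ∑ b, ∑ c, christoffelFirst H x a b c * v b * v c =
      ∑ b, ∑ c, pd (fun y => H y a b) c x * v c * v b -
        (∑ b, ∑ c, pd (fun y => H y b c) a x * v b * v c) / 2 := by
  have hX : ∑ b, ∑ c, pd (fun y => H y c a) b x * v b * v c =
      ∑ b, ∑ c, pd (fun y => H y a b) c x * v c * v b := by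
    rw [sum_comm]
    exact sum_congr rfl fun b _ => sum_congr rfl fun c _ => by rw [hsym]
  have hY : ∑ b, ∑ c, pd (fun y => H y b a) c x * v b * v c =
      ∑ b, ∑ c, pd (fun y => H y a b) c x * v c * v b :=
    sum_congr rfl fun b _ => sum_congr rfl fun c _ => by rw [hsym]; ring
  calc _ = (∑ b, ∑ c, pd (fun y => H y c a) b x * v b * v c +
        ∑ b, ∑ c, pd (fun y => H y b a) c x * v b * v c -
        ∑ b, ∑ c, pd (fun y => H y b c) a x * v b * v c) / 2 := by
        simp only [christoffelFirst, sum_div, ← sum_add_distrib, ← sum_sub_distrib]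
        exact sum_congr rfl fun b _ => sum_congr rfl fun c _ => by ring
    _ = _ := by rw [hX, hY]; ring

lemma sum_christoffel_mul_mul
    (hsym : ∀ b c d, pd (fun y => H y b c) d x = pd (fun y => H y c b) d x)
    (v : Fin n → ℝ) (e : Fin n) :
    ∑ b, ∑ c, christoffel H x e b c * v b * v c =
      ((Matrix.of (H x))⁻¹ *ᵥ fun a => ∑ b, ∑ c, pd (fun y => H y a b) c x * v c * v b -
        (∑ b, ∑ c, pd (fun y => H y b c) a x * v b * v c) / 2) e := by
  calc ∑ b, ∑ c, christoffel H x e b c * v b * v c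
      = ∑ b, ∑ c, ∑ a, minv (H x) e a * (christoffelFirst H x a b c * v b * v c) := by
        simp only [christoffel_eq_sum_minv_mul_christoffelFirst, sum_mul, mul_assoc]
    _ = ∑ a, minv (H x) e a * ∑ b, ∑ c, christoffelFirst H x a b c * v b * v c := by
        simp only [mul_sum]
        exact (sum_congr rfl fun _ _ => sum_comm).trans sum_comm
    _ = _ := by simp only [sum_christoffelFirst_mul_mul hsym]; rfl

lemma add_sum_christoffel_eq_of_lowered
    (hsym : ∀ b c d, pd (fun y => H y b c) d x = pd (fun y => H y c b) d x)
    (hinv : IsUnit (Matrix.of (H x)).det) {v w : Fin n → ℝ} {κ : ℝ}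
    (h : ∀ a, ∑ b, H x a b * w b + ∑ b, ∑ c, pd (fun y => H y a b) c x * v c * v b =
      κ * ∑ b, H x a b * v b + (∑ b, ∑ c, pd (fun y => H y b c) a x * v b * v c) / 2)
    (e : Fin n) :
    w e + ∑ b, ∑ c, christoffel H x e b c * v b * v c = κ * v e := by
  set A := Matrix.of (H x)
  set F : Fin n → ℝ := fun a => ∑ b, ∑ c, pd (fun y => H y a b) c x * v c * v b -
    (∑ b, ∑ c, pd (fun y => H y b c) a x * v b * v c) / 2
  have hlow : A *ᵥ w + F = κ • (A *ᵥ v) := funext fun a => by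
    simp only [Pi.add_apply, Pi.smul_apply, smul_eq_mul, Matrix.mulVec, dotProduct, A, F,
      Matrix.of_apply]
    linarith [h a]
  have hw : w + A⁻¹ *ᵥ F = κ • v :=
    calc w + A⁻¹ *ᵥ F = A⁻¹ *ᵥ (A *ᵥ w + F) := by
          rw [Matrix.mulVec_add, Matrix.mulVec_mulVec, Matrix.nonsing_inv_mul A hinv,
            Matrix.one_mulVec]
      _ = κ • v := by
          rw [hlow, Matrix.mulVec_smul, Matrix.mulVec_mulVec, Matrix.nonsing_inv_mul A hinv,
            Matrix.one_mulVec]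
  rw [sum_christoffel_mul_mul hsym]
  exact congrFun hw e

end Christoffel

theorem autoparallel_from_action_nonaffine_general {n : ℕ} (U : Set (Fin n → ℝ)) (hU : IsOpen U)
    (H : (Fin n → ℝ) → Fin n → Fin n → ℝ)
    (hH : ContDiffOn ℝ (⊤ : ℕ∞) H U)
    (hHsym : ∀ x ∈ U, ∀ a b, H x a b = H x b a)
    (hHinv : ∀ x ∈ U, IsUnit (Matrix.of (H x)).det)
    (I : Set ℝ) (hI : IsOpen I)
    (γ : ℝ → Fin n → ℝ) (hγ : ContDiffOn ℝ (⊤ : ℕ∞) γ I)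
    (hmaps : ∀ t ∈ I, γ t ∈ U)
    (hne : ∀ t ∈ I, (∑ a, ∑ b, H (γ t) a b * cderiv γ a t * cderiv γ b t) ≠ 0)
    (hEL : ∀ a, ∀ t ∈ I,
      deriv (fun s => (1 / lag H γ s) * ∑ b, H (γ s) a b * cderiv γ b s) t =
        (1 / (2 * lag H γ t)) *
          ∑ b, ∑ c, pd (fun y => H y b c) a (γ t) * cderiv γ b t * cderiv γ c t) :
    ∀ t ∈ I, ∀ a, cderiv2 γ a t
      + ∑ b, ∑ c, christoffel H (γ t) a b c * cderiv γ b t * cderiv γ c t =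
      (deriv (lag H γ) t / lag H γ t) * cderiv γ a t := by
  intro t ht e
  have hx := hmaps t ht
  have hγt : DifferentiableAt ℝ γ t :=
    (hγ.differentiableOn (by simp) t ht).differentiableAt (hI.mem_nhds ht)
  have hγ' := differentiableAt_cderiv (hγ.of_le (WithTop.coe_le_coe.2 le_top)) hI ht
  have hHt : ∀ a b, DifferentiableAt ℝ (fun y => H y a b) (γ t) := fun a b =>
    have hHx := (hH.differentiableOn (by simp) _ hx).differentiableAt (hU.mem_nhds hx)
    differentiableAt_pi.1 (differentiableAt_pi.1 hHx a) b
  have hL := differentiableAt_lag hHt hγt hγ' (hne t ht)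
  refine add_sum_christoffel_eq_of_lowered
    (fun b c d => pd_congr_of_eqOn hU hx (fun y hy => hHsym y hy b c) d) (hHinv _ hx)
    (v := fun b => cderiv γ b t) (w := fun b => cderiv2 γ b t)
    (κ := deriv (lag H γ) t / lag H γ t) (fun a => ?_) e
  linarith [eq_of_deriv_one_div_mul_eq hL.hasDerivAt (lag_ne_zero (hne t ht))
    (hasDerivAt_momentum hHt hγt hγ' a) (hEL a t ht)]

/-- **Action of the autoparallel equation, non-affine parametrization**: if `γ` satisfies the
Euler–Lagrange equations of `𝓛 = √|H_{ab} γ'^a γ'^b|`, then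
`γ''^a + Γ[H]^a_{bc} γ'^b γ'^c = (𝓛'/𝓛) γ'^a`. -/
theorem autoparallel_from_action_nonaffine {n : ℕ} (U : Set (Fin n → ℝ)) (hU : IsOpen U)
    (H : (Fin n → ℝ) → Fin n → Fin n → ℝ)
    (hH : ContDiffOn ℝ (⊤ : ℕ∞) H U)
    (hHsym : ∀ x ∈ U, ∀ a b, H x a b = H x b a)
    (hHinv : ∀ x ∈ U, IsUnit (Matrix.of (H x)).det)
    (I : Set ℝ) (hI : IsOpen I) (hIconn : IsPreconnected I)
    (γ : ℝ → Fin n → ℝ) (hγ : ContDiffOn ℝ (⊤ : ℕ∞) γ I)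
    (hmaps : ∀ t ∈ I, γ t ∈ U)
    (hne : ∀ t ∈ I, (∑ a, ∑ b, H (γ t) a b * cderiv γ a t * cderiv γ b t) ≠ 0)
    (hEL : ∀ a, ∀ t ∈ I,
      deriv (fun s => (1 / lag H γ s) * ∑ b, H (γ s) a b * cderiv γ b s) t =
        (1 / (2 * lag H γ t)) *
          ∑ b, ∑ c, pd (fun y => H y b c) a (γ t) * cderiv γ b t * cderiv γ c t) :
    ∀ t ∈ I, ∀ a, cderiv2 γ a t
      + ∑ b, ∑ c, christoffel H (γ t) a b c * cderiv γ b t * cderiv γ c t =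
      (deriv (lag H γ) t / lag H γ t) * cderiv γ a t :=
  autoparallel_from_action_nonaffine_general U hU H hH hHsym hHinv I hI γ hγ hmaps hne hEL
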